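/- Let g = 4 and let B be the positive definite symmetric bilinear form on ℝ⁴ associated to the quadratic form Σ_{i=1}^{4} r_i x_i² + Σ_{1 ≤ i < j ≤ 4, (i,j) ≠ (1,2)} r_{ij} (x_i − x_j)² + r·q_ω, where q_ω(x) = 2(x₁²+x₂²+x₃²+x₄²) + 2x₁x₂ − 2(x₁+x₂)(x₃+x₄), and all r_i, r_{ij}, r > 0 (i.e. B lies in the interior of the Voronoi cone V₂). Then both conv{0, s₁, s₂, s₁+s₂+s₃, s₁+s₂+s₃+s₄} and conv{s₁, s₂, s₁+s₂, s₁+s₂+s₃, s₁+s₂+s₃+s₄} are Delaunay cells of B. -/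

import Mathlib

open Matrix Set

noncomputable section

/-- The standard lattice `ℤ^g` sitting inside `ℝ^g`. -/
def latticePts (g : ℕ) : Set (Fin g → ℝ) :=
  Set.range (fun a : Fin g → ℤ => fun i => (a i : ℝ))

/-- `σ` is a (closed) Delaunay cell of the bilinear form `B`: there is an `α ∈ ℝ^g`
such that `σ` is the convex hull of the lattice points nearest to `α`
(with respect to the distance defined by `B`). -/
def IsDelaunayCell {g : ℕ} (B : (Fin g → ℝ) → (Fin g → ℝ) → ℝ)
    (σ : Set (Fin g → ℝ)) : Prop :=
  ∃ α : Fin g → ℝ, σ = convexHull ℝ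
    {a | a ∈ latticePts g ∧ ∀ b ∈ latticePts g, B (a - α) (a - α) ≤ B (b - α) (b - α)}

/-- `C(0,S)`: the cone generated by `S` over the nonnegative reals. -/
def cone0 {g : ℕ} (S : Set (Fin g → ℝ)) : Set (Fin g → ℝ) :=
  {x | ∃ r : ℝ, 0 ≤ r ∧ ∃ y ∈ convexHull ℝ S, x = r • y}

/-- `Semi(0, S ∩ ℤ^g)`: the additive submonoid generated by the lattice points of `S`. -/
def semi0 {g : ℕ} (S : Set (Fin g → ℝ)) : Set (Fin g → ℝ) :=
  (AddSubmonoid.closure (S ∩ latticePts g) : AddSubmonoid (Fin g → ℝ))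

/-- The standard basis vector `s_i` of `ℝ^g`. -/
def stdV (g : ℕ) (i : Fin g) : Fin g → ℝ := Pi.single i 1

/-- Translation of a subset of `ℝ^g` by a lattice vector `v ∈ ℤ^g`. -/
def zTrans {g : ℕ} (v : Fin g → ℤ) (S : Set (Fin g → ℝ)) : Set (Fin g → ℝ) :=
  (fun x => (fun i => (v i : ℝ)) + x) '' S

/-- The rank-one symmetric matrix of the squared linear form `(c ⬝ x)²`. -/
def sqM (c : Fin 4 → ℝ) : Matrix (Fin 4) (Fin 4) ℝ := vecMulVec c c

/-- The matrix of the quadratic form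
`q_ω(x) = 2(x₁²+x₂²+x₃²+x₄²) + 2x₁x₂ − 2(x₁+x₂)(x₃+x₄)`. -/
def Mω : Matrix (Fin 4) (Fin 4) ℝ :=
  !![(2:ℝ), 1, -1, -1; 1, 2, -1, -1; -1, -1, 2, 0; -1, -1, 0, 2]

/-- A point in the interior of the Voronoi cone `V₂`: the matrix of
`Σ rᵢ xᵢ² + Σ_{i<j, (i,j)≠(1,2)} r_{ij} (xᵢ-xⱼ)² + r·q_ω`. -/
def MV2 (r₁ r₂ r₃ r₄ r₁₃ r₁₄ r₂₃ r₂₄ r₃₄ r : ℝ) : Matrix (Fin 4) (Fin 4) ℝ :=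
  r₁ • sqM (stdV 4 0) + r₂ • sqM (stdV 4 1) + r₃ • sqM (stdV 4 2) + r₄ • sqM (stdV 4 3)
    + r₁₃ • sqM (stdV 4 0 - stdV 4 2) + r₁₄ • sqM (stdV 4 0 - stdV 4 3)
    + r₂₃ • sqM (stdV 4 1 - stdV 4 2) + r₂₄ • sqM (stdV 4 1 - stdV 4 3)
    + r₃₄ • sqM (stdV 4 2 - stdV 4 3) + r • Mω

/-!
Write `Q(x) = Σₖ wₖ ℓₖ(x)² + r |ω(x)|²`, where the `ℓₖ` are the nine forms `xᵢ`, `xᵢ - xⱼ`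
(`(i,j) ≠ (1,2)`) and `ω(x) = (x₁+x₂-x₃-x₄, x₁, x₂, x₃-x₄)`, so that `q_ω = |ω|²`.
For a suitable centre `α`, `Q(x - α)` is a constant plus an excess that is a positive
combination of terms nonnegative on `ℤ⁴`: `ℓ(ℓ - 1)` for each of the nine forms, together with
`Σⱼ ωⱼ(ωⱼ - 1)` for the first simplex, or `|ω - (1,1,1,0)|² - 1` for the second (nonnegative
because the coordinates of `ω - (1,1,1,0)` have odd sum). The nearest lattice points are the
zeros of the excess. The nine forms take values in `{0, 1}` exactly at
`0, s₁, s₂, s₁+s₂, s₁+s₂+s₃, s₁+s₂+s₃+s₄`, and the `ω`-term removes `s₁+s₂`, resp. `0`.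
-/

theorem isDelaunayCell_of_excess {g : ℕ} {B : (Fin g → ℝ) → (Fin g → ℝ) → ℝ}
    (α : Fin g → ℝ) (c : ℝ) {E : (Fin g → ℤ) → ℝ}
    (hB : ∀ n : Fin g → ℤ, B (Int.cast ∘ n - α) (Int.cast ∘ n - α) = c + E n)
    (hE : ∀ n, 0 ≤ E n) (hzero : {n | E n = 0}.Nonempty) :
    IsDelaunayCell B (convexHull ℝ ((Int.cast ∘ ·) '' {n | E n = 0})) := by
  refine ⟨α, congrArg _ (Set.ext fun x => ⟨?_, ?_⟩)⟩
  · rintro ⟨n, hn, rfl⟩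
    refine ⟨⟨n, rfl⟩, ?_⟩
    rintro _ ⟨m, rfl⟩
    change _ ≤ B (Int.cast ∘ m - α) (Int.cast ∘ m - α)
    rw [hB, hB, hn.out]
    linarith [hE m]
  · rintro ⟨⟨n, rfl⟩, hmin⟩
    obtain ⟨m, hm⟩ := hzero
    have hnm : B (Int.cast ∘ n - α) (Int.cast ∘ n - α) ≤ B (Int.cast ∘ m - α) (Int.cast ∘ m - α) :=
      hmin _ ⟨m, rfl⟩
    rw [hB, hB, hm.out] at hnm
    exact ⟨n, le_antisymm (by linarith) (hE n), rfl⟩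

theorem Matrix.IsHermitian.dotProduct_mulVec_sub_self {g : ℕ} {M : Matrix (Fin g) (Fin g) ℝ}
    (hM : M.IsHermitian) (x α : Fin g → ℝ) :
    (x - α) ⬝ᵥ M *ᵥ (x - α) = α ⬝ᵥ M *ᵥ α + (x ⬝ᵥ M *ᵥ x - 2 * (x ⬝ᵥ M *ᵥ α)) := by
  have hsymm : α ⬝ᵥ M *ᵥ x = x ⬝ᵥ M *ᵥ α := by
    rw [dotProduct_mulVec, ← vecMul_transpose, ← conjTranspose_eq_transpose_of_trivial, hM.eq,
      dotProduct_comm]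
  simp only [mulVec_sub, dotProduct_sub, sub_dotProduct, hsymm]
  ring

theorem Matrix.PosDef.isDelaunayCell_of_excess {g : ℕ} {M : Matrix (Fin g) (Fin g) ℝ}
    (hM : M.PosDef) (v : Fin g → ℝ) (c : ℝ) {E : (Fin g → ℤ) → ℝ}
    (hMv : ∀ n : Fin g → ℤ,
      (Int.cast ∘ n) ⬝ᵥ M *ᵥ (Int.cast ∘ n) - 2 * ((Int.cast ∘ n) ⬝ᵥ v) = c + E n)
    (hE : ∀ n, 0 ≤ E n) (hzero : {n | E n = 0}.Nonempty) :
    IsDelaunayCell (fun x y => x ⬝ᵥ M *ᵥ y) (convexHull ℝ ((Int.cast ∘ ·) '' {n | E n = 0})) := by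
  obtain ⟨α, hα⟩ := mulVec_surjective_iff_isUnit.2 hM.isUnit v
  refine _root_.isDelaunayCell_of_excess α (α ⬝ᵥ M *ᵥ α + c) (fun n => ?_) hE hzero
  rw [hM.isHermitian.dotProduct_mulVec_sub_self, hα, hMv]
  ring

theorem Int.mul_sub_one_nonneg (m : ℤ) : 0 ≤ m * (m - 1) := by
  nlinarith [Int.le_self_sq m]

theorem one_le_sum_sq_of_odd_sum {ι : Type*} [Fintype ι] {y : ι → ℤ} (hy : Odd (∑ i, y i)) :
    1 ≤ ∑ i, y i ^ 2 := by
  have hodd : Odd (∑ i, y i ^ 2) := by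
    have : Even (∑ i, y i ^ 2 - ∑ i, y i) := by
      rw [← Finset.sum_sub_distrib]
      exact Finset.even_sum _ fun i _ => by simpa [sq, mul_sub] using Int.even_mul_pred_self (y i)
    simpa using this.add_odd hy
  have hnonneg : 0 ≤ ∑ i, y i ^ 2 := Finset.sum_nonneg fun i _ => sq_nonneg (y i)
  obtain ⟨k, hk⟩ := hodd
  omega

def binaryDefect {ι : Type*} [Fintype ι] (w : ι → ℝ) (f : ι → ℤ) : ℝ :=
  ∑ k, w k * ((f k * (f k - 1) : ℤ) : ℝ)

theorem binaryDefect_nonneg {ι : Type*} [Fintype ι] {w : ι → ℝ} (hw : ∀ k, 0 ≤ w k)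
    (f : ι → ℤ) : 0 ≤ binaryDefect w f :=
  Finset.sum_nonneg fun k _ => mul_nonneg (hw k) (Int.cast_nonneg (f k).mul_sub_one_nonneg)

theorem binaryDefect_eq_zero_iff {ι : Type*} [Fintype ι] {w : ι → ℝ} (hw : ∀ k, 0 < w k)
    (f : ι → ℤ) : binaryDefect w f = 0 ↔ ∀ k, f k = 0 ∨ f k = 1 := by
  rw [binaryDefect, Finset.sum_eq_zero_iff_of_nonneg fun k _ =>
    mul_nonneg (hw k).le (Int.cast_nonneg (f k).mul_sub_one_nonneg)]
  simp [(hw _).ne', sub_eq_zero]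

def v2Forms (n : Fin 4 → ℤ) : Fin 9 → ℤ :=
  ![n 0, n 1, n 2, n 3, n 0 - n 2, n 0 - n 3, n 1 - n 2, n 1 - n 3, n 2 - n 3]

def omegaForms (n : Fin 4 → ℤ) : Fin 4 → ℤ := ![n 0 + n 1 - n 2 - n 3, n 0, n 1, n 2 - n 3]

theorem v2Forms_binary_iff (n : Fin 4 → ℤ) :
    (∀ k, v2Forms n k = 0 ∨ v2Forms n k = 1) ↔
      n ∈ ({![0, 0, 0, 0], ![1, 0, 0, 0], ![0, 1, 0, 0], ![1, 1, 0, 0], ![1, 1, 1, 0],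
        ![1, 1, 1, 1]} : Set (Fin 4 → ℤ)) := by
  simp only [v2Forms, Fin.forall_fin_succ, cons_val_zero, cons_val_succ, IsEmpty.forall_iff,
    and_true, Fin.succ_zero_eq_one, Fin.succ_one_eq_two, Fin.reduceSucc, Set.mem_insert_iff,
    Set.mem_singleton_iff, funext_iff]
  constructor
  · rintro ⟨ha | ha, hb | hb, hc | hc, hd | hd, h⟩ <;> simp_all
  · omega

theorem one_le_sum_sq_omegaForms_sub (n : Fin 4 → ℤ) :
    1 ≤ ∑ j, (omegaForms n j - ![1, 1, 1, 0] j) ^ 2 :=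
  one_le_sum_sq_of_odd_sum ⟨n 0 + n 1 - n 3 - 2, by simp [Fin.sum_univ_four, omegaForms]; ring⟩

def excess₁ (w : Fin 9 → ℝ) (r : ℝ) (n : Fin 4 → ℤ) : ℝ :=
  binaryDefect w (v2Forms n) + binaryDefect (fun _ => r) (omegaForms n)

def excess₂ (w : Fin 9 → ℝ) (r : ℝ) (n : Fin 4 → ℤ) : ℝ :=
  binaryDefect w (v2Forms n) + r * ((∑ j, (omegaForms n j - ![1, 1, 1, 0] j) ^ 2 - 1 : ℤ) : ℝ)

section Excess

variable {w : Fin 9 → ℝ} {r : ℝ}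

theorem excess₁_nonneg (hw : ∀ k, 0 ≤ w k) (hr : 0 ≤ r) (n : Fin 4 → ℤ) :
    0 ≤ excess₁ w r n :=
  add_nonneg (binaryDefect_nonneg hw _) (binaryDefect_nonneg (fun _ => hr) _)

theorem excess₂_nonneg (hw : ∀ k, 0 ≤ w k) (hr : 0 ≤ r) (n : Fin 4 → ℤ) :
    0 ≤ excess₂ w r n :=
  add_nonneg (binaryDefect_nonneg hw _) (mul_nonneg hr (Int.cast_nonneg
    (sub_nonneg.2 (one_le_sum_sq_omegaForms_sub n))))

theorem setOf_excess₁_eq_zero (hw : ∀ k, 0 < w k) (hr : 0 < r) :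
    {n | excess₁ w r n = 0} =
      {![0, 0, 0, 0], ![1, 0, 0, 0], ![0, 1, 0, 0], ![1, 1, 1, 0], ![1, 1, 1, 1]} := by
  ext n
  rw [Set.mem_ofPred_eq, excess₁, add_eq_zero_iff_of_nonneg
    (binaryDefect_nonneg (fun k => (hw k).le) _) (binaryDefect_nonneg (fun _ => hr.le) _),
    binaryDefect_eq_zero_iff hw, binaryDefect_eq_zero_iff fun _ => hr, v2Forms_binary_iff]
  constructor
  · rintro ⟨hn | hn | hn | hn | hn | hn, h⟩ <;> subst hn <;>
      simp [Fin.forall_fin_succ, omegaForms] at h ⊢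
  · rintro (hn | hn | hn | hn | hn) <;> subst hn <;> simp [Fin.forall_fin_succ, omegaForms]

theorem setOf_excess₂_eq_zero (hw : ∀ k, 0 < w k) (hr : 0 < r) :
    {n | excess₂ w r n = 0} =
      {![1, 0, 0, 0], ![0, 1, 0, 0], ![1, 1, 0, 0], ![1, 1, 1, 0], ![1, 1, 1, 1]} := by
  ext n
  rw [Set.mem_ofPred_eq, excess₂, add_eq_zero_iff_of_nonneg
    (binaryDefect_nonneg (fun k => (hw k).le) _) (mul_nonneg hr.le (Int.cast_nonneg
      (sub_nonneg.2 (one_le_sum_sq_omegaForms_sub n)))),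
    binaryDefect_eq_zero_iff hw, v2Forms_binary_iff]
  simp only [mul_eq_zero, hr.ne', false_or, Int.cast_eq_zero, sub_eq_zero]
  constructor
  · rintro ⟨hn | hn | hn | hn | hn | hn, h⟩ <;> subst hn <;>
      simp [Fin.sum_univ_four, omegaForms] at h ⊢
  · rintro (hn | hn | hn | hn | hn) <;> subst hn <;> simp [Fin.sum_univ_four, omegaForms]

end Excess

section V2

variable (r₁ r₂ r₃ r₄ r₁₃ r₁₄ r₂₃ r₂₄ r₃₄ r : ℝ)

theorem dotProduct_MV2_mulVec_self (x : Fin 4 → ℝ) :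
    x ⬝ᵥ MV2 r₁ r₂ r₃ r₄ r₁₃ r₁₄ r₂₃ r₂₄ r₃₄ r *ᵥ x =
      r₁ * x 0 ^ 2 + r₂ * x 1 ^ 2 + r₃ * x 2 ^ 2 + r₄ * x 3 ^ 2
      + r₁₃ * (x 0 - x 2) ^ 2 + r₁₄ * (x 0 - x 3) ^ 2
      + r₂₃ * (x 1 - x 2) ^ 2 + r₂₄ * (x 1 - x 3) ^ 2 + r₃₄ * (x 2 - x 3) ^ 2
      + r * ((x 0 + x 1 - x 2 - x 3) ^ 2 + x 0 ^ 2 + x 1 ^ 2 + (x 2 - x 3) ^ 2) := by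
  simp [MV2, sqM, Mω, stdV, mulVec, dotProduct, Fin.sum_univ_four, vecMulVec_apply]
  ring

theorem isHermitian_MV2 : (MV2 r₁ r₂ r₃ r₄ r₁₃ r₁₄ r₂₃ r₂₄ r₃₄ r).IsHermitian := by
  ext i j
  fin_cases i <;> fin_cases j <;> simp [MV2, sqM, Mω, stdV, vecMulVec_apply]

variable {r₁ r₂ r₃ r₄ r₁₃ r₁₄ r₂₃ r₂₄ r₃₄ r}

theorem posDef_MV2 (h₁ : 0 < r₁) (h₂ : 0 < r₂) (h₃ : 0 < r₃) (h₄ : 0 < r₄)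
    (h₁₃ : 0 ≤ r₁₃) (h₁₄ : 0 ≤ r₁₄) (h₂₃ : 0 ≤ r₂₃) (h₂₄ : 0 ≤ r₂₄) (h₃₄ : 0 ≤ r₃₄)
    (hr : 0 ≤ r) : (MV2 r₁ r₂ r₃ r₄ r₁₃ r₁₄ r₂₃ r₂₄ r₃₄ r).PosDef := by
  refine posDef_iff_dotProduct_mulVec.2 ⟨isHermitian_MV2 .., fun x hx => ?_⟩
  obtain ⟨i, hi⟩ := Function.ne_iff.1 hx
  have hdiag : 0 < r₁ * x 0 ^ 2 + r₂ * x 1 ^ 2 + r₃ * x 2 ^ 2 + r₄ * x 3 ^ 2 := by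
    fin_cases i <;> simp at hi <;> positivity
  rw [star_trivial, dotProduct_MV2_mulVec_self]
  -- `positivity` closes the leading partial sum with `hdiag`
  positivity

variable (r₁ r₂ r₃ r₄ r₁₃ r₁₄ r₂₃ r₂₄ r₃₄) in
def v2Weights : Fin 9 → ℝ := ![r₁, r₂, r₃, r₄, r₁₃, r₁₄, r₂₃, r₂₄, r₃₄]

theorem v2Weights_pos (h₁ : 0 < r₁) (h₂ : 0 < r₂) (h₃ : 0 < r₃) (h₄ : 0 < r₄)
    (h₁₃ : 0 < r₁₃) (h₁₄ : 0 < r₁₄) (h₂₃ : 0 < r₂₃) (h₂₄ : 0 < r₂₄) (h₃₄ : 0 < r₃₄) :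
    ∀ k, 0 < v2Weights r₁ r₂ r₃ r₄ r₁₃ r₁₄ r₂₃ r₂₄ r₃₄ k := by
  simp [Fin.forall_fin_succ, v2Weights, *]

-- The vectors are `M α` for the centres `α`: `2 x ⬝ᵥ M α` cancels the linear part of the excess,
-- so it is `Σₖ wₖ ℓₖ(x) + r Σⱼ ωⱼ(x)`, resp. `Σₖ wₖ ℓₖ(x) + 2r (ω₁ + ω₂ + ω₃)(x)`.
theorem dotProduct_MV2_mulVec_self_sub_eq_excess₁ (n : Fin 4 → ℤ) :
    (Int.cast ∘ n) ⬝ᵥ MV2 r₁ r₂ r₃ r₄ r₁₃ r₁₄ r₂₃ r₂₄ r₃₄ r *ᵥ (Int.cast ∘ n)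
      - 2 * ((Int.cast ∘ n) ⬝ᵥ ![(r₁ + r₁₃ + r₁₄ + 2 * r) / 2, (r₂ + r₂₃ + r₂₄ + 2 * r) / 2,
          (r₃ - r₁₃ - r₂₃ + r₃₄) / 2, (r₄ - r₁₄ - r₂₄ - r₃₄ - 2 * r) / 2])
      = 0 + excess₁ (v2Weights r₁ r₂ r₃ r₄ r₁₃ r₁₄ r₂₃ r₂₄ r₃₄) r n := by
  rw [dotProduct_MV2_mulVec_self]
  simp [excess₁, binaryDefect, v2Weights, v2Forms, omegaForms, Fin.sum_univ_succ, dotProduct]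
  ring

theorem dotProduct_MV2_mulVec_self_sub_eq_excess₂ (n : Fin 4 → ℤ) :
    (Int.cast ∘ n) ⬝ᵥ MV2 r₁ r₂ r₃ r₄ r₁₃ r₁₄ r₂₃ r₂₄ r₃₄ r *ᵥ (Int.cast ∘ n)
      - 2 * ((Int.cast ∘ n) ⬝ᵥ ![(r₁ + r₁₃ + r₁₄ + 4 * r) / 2, (r₂ + r₂₃ + r₂₄ + 4 * r) / 2,
          (r₃ - r₁₃ - r₂₃ + r₃₄ - 2 * r) / 2, (r₄ - r₁₄ - r₂₄ - r₃₄ - 2 * r) / 2])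
      = -2 * r + excess₂ (v2Weights r₁ r₂ r₃ r₄ r₁₃ r₁₄ r₂₃ r₂₄ r₃₄) r n := by
  rw [dotProduct_MV2_mulVec_self]
  simp [excess₂, binaryDefect, v2Weights, v2Forms, omegaForms, Fin.sum_univ_succ, dotProduct]
  ring

end V2

theorem image_intCast_simplex₁ :
    (Int.cast ∘ · : (Fin 4 → ℤ) → Fin 4 → ℝ) '' {![0, 0, 0, 0], ![1, 0, 0, 0], ![0, 1, 0, 0],
      ![1, 1, 1, 0], ![1, 1, 1, 1]} =
      {0, stdV 4 0, stdV 4 1, stdV 4 0 + stdV 4 1 + stdV 4 2,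
        stdV 4 0 + stdV 4 1 + stdV 4 2 + stdV 4 3} := by
  simp only [Set.image_insert_eq, Set.image_singleton]
  congr! <;> ext i <;> fin_cases i <;> simp [stdV]

theorem image_intCast_simplex₂ :
    (Int.cast ∘ · : (Fin 4 → ℤ) → Fin 4 → ℝ) '' {![1, 0, 0, 0], ![0, 1, 0, 0], ![1, 1, 0, 0],
      ![1, 1, 1, 0], ![1, 1, 1, 1]} =
      {stdV 4 0, stdV 4 1, stdV 4 0 + stdV 4 1, stdV 4 0 + stdV 4 1 + stdV 4 2,
        stdV 4 0 + stdV 4 1 + stdV 4 2 + stdV 4 3} := by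
  simp only [Set.image_insert_eq, Set.image_singleton]
  congr! <;> ext i <;> fin_cases i <;> simp [stdV]

/-- For `B` in the interior of the Voronoi cone `V₂`, the simplices
`conv{0, s₁, s₂, s₁+s₂+s₃, s₁+s₂+s₃+s₄}` and `conv{s₁, s₂, s₁+s₂, s₁+s₂+s₃, s₁+s₂+s₃+s₄}`
are Delaunay cells. -/
theorem delaunay_cells_V2_examples
    (r₁ r₂ r₃ r₄ r₁₃ r₁₄ r₂₃ r₂₄ r₃₄ r : ℝ)
    (h₁ : 0 < r₁) (h₂ : 0 < r₂) (h₃ : 0 < r₃) (h₄ : 0 < r₄)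
    (h₁₃ : 0 < r₁₃) (h₁₄ : 0 < r₁₄)
    (h₂₃ : 0 < r₂₃) (h₂₄ : 0 < r₂₄) (h₃₄ : 0 < r₃₄) (hr : 0 < r) :
    IsDelaunayCell
      (fun x y => x ⬝ᵥ (MV2 r₁ r₂ r₃ r₄ r₁₃ r₁₄ r₂₃ r₂₄ r₃₄ r).mulVec y)
      (convexHull ℝ
        {(0 : Fin 4 → ℝ), stdV 4 0, stdV 4 1,
          stdV 4 0 + stdV 4 1 + stdV 4 2,
          stdV 4 0 + stdV 4 1 + stdV 4 2 + stdV 4 3}) ∧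
    IsDelaunayCell
      (fun x y => x ⬝ᵥ (MV2 r₁ r₂ r₃ r₄ r₁₃ r₁₄ r₂₃ r₂₄ r₃₄ r).mulVec y)
      (convexHull ℝ
        {stdV 4 0, stdV 4 1, stdV 4 0 + stdV 4 1,
          stdV 4 0 + stdV 4 1 + stdV 4 2,
          stdV 4 0 + stdV 4 1 + stdV 4 2 + stdV 4 3}) := by
  have hM := posDef_MV2 h₁ h₂ h₃ h₄ h₁₃.le h₁₄.le h₂₃.le h₂₄.le h₃₄.le hr.le
  have hw := v2Weights_pos h₁ h₂ h₃ h₄ h₁₃ h₁₄ h₂₃ h₂₄ h₃₄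
  have hw' : ∀ k, 0 ≤ v2Weights r₁ r₂ r₃ r₄ r₁₃ r₁₄ r₂₃ r₂₄ r₃₄ k := fun k => (hw k).le
  constructor
  · have hcell := hM.isDelaunayCell_of_excess _ _
      dotProduct_MV2_mulVec_self_sub_eq_excess₁ (excess₁_nonneg hw' hr.le)
      (by rw [setOf_excess₁_eq_zero hw hr]; exact Set.insert_nonempty _ _)
    rwa [setOf_excess₁_eq_zero hw hr, image_intCast_simplex₁] at hcell
  · have hcell := hM.isDelaunayCell_of_excess _ _
      dotProduct_MV2_mulVec_self_sub_eq_excess₂ (excess₂_nonneg hw' hr.le)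
      (by rw [setOf_excess₂_eq_zero hw hr]; exact Set.insert_nonempty _ _)
    rwa [setOf_excess₂_eq_zero hw hr, image_intCast_simplex₂] at hcell
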